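/- Let A ⊆ ℝ be an open invex set with respect to η satisfying Condition C, and a, b ∈ A with a < a + η(b,a), f : A → ℝ differentiable with f′ integrable and |f′| preinvex on A. Then for every α > 0: |(f(a)+f(a+η(b,a)))/2 − (Γ(α+1)/(2 η(b,a)^α))[J_{a+}^α f(a+η(b,a)) + J_{(a+η(b,a))−}^α f(a)]| ≤ (η(b,a)/(2(α+1))) (1 − 1/2^α) (|f′(a)| + |f′(a+η(b,a))|). -/

import Mathlib

/-!
Write `h = η b a`. Substituting `x = a + t h` rescales both fractional integrals to `[0, 1]`,
and integrating by parts against the kernel `(1 - t) ^ α - t ^ α`, which equals `1` at `t = 0`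
and `-1` at `t = 1`, turns the left-hand side into
`(h / 2) |∫₀¹ ((1 - t) ^ α - t ^ α) f'(a + t h) dt|`.

Condition C gives `η a (a + h) = -h`, so preinvexity of `|f'|`, applied from the endpoint
`a + h` back to `a`, bounds `|f'(a + t h)|` by `(1 - t) |f'(a)| + t |f'(a + h)|`. The kernel is
odd under `t ↦ 1 - t`, so against its absolute value the weights `1 - t` and `t` both integrate
to half of `∫₀¹ |(1 - t) ^ α - t ^ α| dt = 2 (1 - 2 ^ (-α)) / (α + 1)`.
-/
open MeasureTheory intervalIntegral

/-- Riemann-Liouville left fractional integral `J_{a+}^α f(x)`. -/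
noncomputable def JL (α a x : ℝ) (f : ℝ → ℝ) : ℝ :=
  (1 / Real.Gamma α) * ∫ t in a..x, (x - t) ^ (α - 1) * f t

/-- Riemann-Liouville right fractional integral `J_{b-}^α f(x)`. -/
noncomputable def JR (α x b : ℝ) (f : ℝ → ℝ) : ℝ :=
  (1 / Real.Gamma α) * ∫ t in x..b, (t - x) ^ (α - 1) * f t

/-- `A` is invex with respect to `η`. -/
def InvexSet (A : Set ℝ) (η : ℝ → ℝ → ℝ) : Prop :=
  ∀ x ∈ A, ∀ y ∈ A, ∀ t ∈ Set.Icc (0:ℝ) 1, x + t * η y x ∈ A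

/-- `f` is preinvex with respect to `η` on `A`. -/
def PreinvexOn (A : Set ℝ) (η : ℝ → ℝ → ℝ) (f : ℝ → ℝ) : Prop :=
  ∀ x ∈ A, ∀ y ∈ A, ∀ t ∈ Set.Icc (0:ℝ) 1,
    f (x + t * η y x) ≤ (1 - t) * f x + t * f y

/-- Condition C of Mohan and Neogy. -/
def CondC (A : Set ℝ) (η : ℝ → ℝ → ℝ) : Prop :=
  ∀ x ∈ A, ∀ y ∈ A, ∀ t ∈ Set.Icc (0:ℝ) 1,
    η y (y + t * η x y) = -t * η x y ∧ η x (y + t * η x y) = (1 - t) * η x y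

open Set

section Invexity

variable {A : Set ℝ} {η : ℝ → ℝ → ℝ} {a b : ℝ}

theorem InvexSet.Icc_subset (hinv : InvexSet A η) (ha : a ∈ A) (hb : b ∈ A) (hη : 0 < η b a) :
    Icc a (a + η b a) ⊆ A := by
  intro x hx
  have ht : (x - a) / η b a ∈ Icc (0 : ℝ) 1 :=
    ⟨div_nonneg (by linarith [hx.1]) hη.le, (div_le_one hη).2 (by linarith [hx.2])⟩
  simpa [div_mul_cancel₀ _ hη.ne'] using hinv a ha b hb _ ht

theorem CondC.eta_self_add_eta (hC : CondC A η) (ha : a ∈ A) (hb : b ∈ A) :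
    η a (a + η b a) = -η b a := by
  simpa using (hC b hb a ha 1 ⟨zero_le_one, le_rfl⟩).1

theorem PreinvexOn.le_segment_of_condC {g : ℝ → ℝ} (hg : PreinvexOn A η g) (hC : CondC A η)
    (ha : a ∈ A) (hb : b ∈ A) (hc : a + η b a ∈ A) {t : ℝ} (ht : t ∈ Icc (0 : ℝ) 1) :
    g (a + t * η b a) ≤ (1 - t) * g a + t * g (a + η b a) := by
  have key := hg _ hc a ha (1 - t) ⟨by linarith [ht.2], by linarith [ht.1]⟩
  rw [hC.eta_self_add_eta ha hb, show a + η b a + (1 - t) * -η b a = a + t * η b a by ring] at key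
  linarith

end Invexity

theorem IntervalIntegrable.comp_add_mul_zero_one {g : ℝ → ℝ} {a h : ℝ} (hh : h ≠ 0)
    (hg : IntervalIntegrable g volume a (a + h)) :
    IntervalIntegrable (fun t => g (a + t * h)) volume 0 1 := by
  simpa [hh] using (hg.comp_add_left a).comp_mul_right (c := h)

theorem integral_self_add_eq_mul_integral_zero_one (g : ℝ → ℝ) (a h : ℝ) :
    ∫ s in a..a + h, g s = h * ∫ t in (0 : ℝ)..1, g (a + t * h) := by
  have := smul_integral_comp_add_mul (a := 0) (b := 1) g h a
  simp only [mul_zero, add_zero, mul_one, smul_eq_mul] at this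
  simp only [this, mul_comm]

theorem JL_self_add_eq (α a : ℝ) {h : ℝ} (hh : 0 < h) (f : ℝ → ℝ) :
    JL α a (a + h) f =
      h ^ α / Real.Gamma α * ∫ t in (0 : ℝ)..1, (1 - t) ^ (α - 1) * f (a + t * h) := by
  have hpt : ∀ t ∈ uIcc (0 : ℝ) 1, (a + h - (a + t * h)) ^ (α - 1) * f (a + t * h) =
      h ^ (α - 1) * ((1 - t) ^ (α - 1) * f (a + t * h)) := by
    intro t ht
    rw [uIcc_of_le zero_le_one] at ht
    rw [show a + h - (a + t * h) = h * (1 - t) by ring, Real.mul_rpow hh.le (by linarith [ht.2])]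
    ring
  rw [JL, integral_self_add_eq_mul_integral_zero_one, intervalIntegral.integral_congr hpt,
    intervalIntegral.integral_const_mul, Real.rpow_sub_one hh.ne']
  field_simp

theorem JR_self_add_eq (α a : ℝ) {h : ℝ} (hh : 0 < h) (f : ℝ → ℝ) :
    JR α a (a + h) f = h ^ α / Real.Gamma α * ∫ t in (0 : ℝ)..1, t ^ (α - 1) * f (a + t * h) := by
  have hpt : ∀ t ∈ uIcc (0 : ℝ) 1, (a + t * h - a) ^ (α - 1) * f (a + t * h) =
      h ^ (α - 1) * (t ^ (α - 1) * f (a + t * h)) := by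
    intro t ht
    rw [uIcc_of_le zero_le_one] at ht
    rw [show a + t * h - a = h * t by ring, Real.mul_rpow hh.le ht.1]
    ring
  rw [JR, integral_self_add_eq_mul_integral_zero_one, intervalIntegral.integral_congr hpt,
    intervalIntegral.integral_const_mul, Real.rpow_sub_one hh.ne']
  field_simp

theorem hasDerivAt_rpow_kernel {α t : ℝ} (ht : t ∈ Ioo (0 : ℝ) 1) :
    HasDerivAt (fun t : ℝ => (1 - t) ^ α - t ^ α)
      (-(α * ((1 - t) ^ (α - 1) + t ^ (α - 1)))) t := by
  have h₁ := ((hasDerivAt_id t).const_sub 1).rpow_const (p := α) (Or.inl (sub_pos.2 ht.2).ne')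
  have h₂ := (hasDerivAt_id t).rpow_const (p := α) (Or.inl ht.1.ne')
  refine (h₁.sub h₂).congr_deriv ?_
  simp only [id]
  ring

theorem continuous_rpow_kernel {α : ℝ} (hα : 0 ≤ α) :
    Continuous fun t : ℝ => (1 - t) ^ α - t ^ α :=
  ((continuous_const.sub continuous_id).rpow_const fun _ => Or.inr hα).sub
    (continuous_id.rpow_const fun _ => Or.inr hα)

theorem integral_rpow_kernel_mul_deriv {α : ℝ} (hα : 0 < α) {φ φ' : ℝ → ℝ}
    (hφ : ∀ t ∈ Icc (0 : ℝ) 1, HasDerivAt φ (φ' t) t)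
    (hφ' : IntervalIntegrable φ' volume 0 1) :
    ∫ t in (0 : ℝ)..1, ((1 - t) ^ α - t ^ α) * φ' t =
      α * ((∫ t in (0 : ℝ)..1, (1 - t) ^ (α - 1) * φ t) + ∫ t in (0 : ℝ)..1, t ^ (α - 1) * φ t) -
        (φ 0 + φ 1) := by
  have hφc : ContinuousOn φ (uIcc 0 1) := by
    rw [uIcc_of_le zero_le_one]
    exact fun t ht => (hφ t ht).continuousAt.continuousWithinAt
  have hleft : IntervalIntegrable (fun t : ℝ => (1 - t) ^ (α - 1)) volume 0 1 := by
    have := intervalIntegrable_rpow' (a := 0) (b := 1) (by linarith : -1 < α - 1)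
    simpa using (this.comp_sub_left 1).symm
  have hright : IntervalIntegrable (fun t : ℝ => t ^ (α - 1)) volume 0 1 :=
    intervalIntegrable_rpow' (by linarith)
  have hparts := intervalIntegral.integral_mul_deriv_eq_deriv_mul_of_hasDerivAt
    (continuous_rpow_kernel hα.le).continuousOn hφc
    (fun t ht => hasDerivAt_rpow_kernel (by simpa using ht))
    (fun t ht => hφ t (Ioo_subset_Icc_self (by simpa using ht)))
    ((hleft.add hright).const_mul α).neg hφ'
  simp only [neg_mul, intervalIntegral.integral_neg, mul_assoc, add_mul,
    intervalIntegral.integral_const_mul] at hparts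
  rw [hparts, intervalIntegral.integral_add (hleft.mul_continuousOn hφc)
    (hright.mul_continuousOn hφc)]
  simp only [sub_self, Real.zero_rpow hα.ne', Real.one_rpow, sub_zero]
  ring

theorem trapezoid_sub_fractional_eq {f : ℝ → ℝ} {a h α : ℝ} (hh : 0 < h) (hα : 0 < α)
    (hf : ∀ x ∈ Icc a (a + h), DifferentiableAt ℝ f x)
    (hf' : IntervalIntegrable (deriv f) volume a (a + h)) :
    (f a + f (a + h)) / 2 -
        Real.Gamma (α + 1) / (2 * h ^ α) * (JL α a (a + h) f + JR α a (a + h) f) =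
      -(h / 2) * ∫ t in (0 : ℝ)..1, ((1 - t) ^ α - t ^ α) * deriv f (a + t * h) := by
  have hφ : ∀ t ∈ Icc (0 : ℝ) 1,
      HasDerivAt (fun t => f (a + t * h)) (deriv f (a + t * h) * h) t := by
    intro t ht
    have hx : a + t * h ∈ Icc a (a + h) := ⟨by nlinarith [ht.1], by nlinarith [ht.2]⟩
    have hlin : HasDerivAt (fun t : ℝ => a + t * h) h t := by
      simpa using ((hasDerivAt_id t).mul_const h).const_add a
    exact (hf _ hx).hasDerivAt.comp t hlin
  have hparts :=
    integral_rpow_kernel_mul_deriv hα hφ ((hf'.comp_add_mul_zero_one hh.ne').mul_const h)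
  simp only [← mul_assoc, intervalIntegral.integral_mul_const, zero_mul, add_zero,
    one_mul] at hparts
  rw [JL_self_add_eq α a hh, JR_self_add_eq α a hh, Real.Gamma_add_one hα.ne']
  generalize (∫ t in (0 : ℝ)..1, (1 - t) ^ (α - 1) * f (a + t * h)) = I₁ at hparts ⊢
  generalize (∫ t in (0 : ℝ)..1, t ^ (α - 1) * f (a + t * h)) = I₂ at hparts ⊢
  generalize (∫ t in (0 : ℝ)..1, ((1 - t) ^ α - t ^ α) * deriv f (a + t * h)) = R at hparts ⊢
  have hΓ := (Real.Gamma_pos_of_pos hα).ne'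
  have hpow := (Real.rpow_pos_of_pos hh α).ne'
  field_simp
  linear_combination hparts

theorem integral_rpow_kernel_zero_half {α : ℝ} (hα : 0 < α) :
    ∫ t in (0 : ℝ)..1 / 2, ((1 - t) ^ α - t ^ α) = (1 - 1 / 2 ^ α) / (α + 1) := by
  have hα₁ : α + 1 ≠ 0 := by linarith
  have hF : ∀ t ∈ uIcc (0 : ℝ) (1 / 2), HasDerivAt
      (fun t : ℝ => -((1 - t) ^ (α + 1) + t ^ (α + 1)) / (α + 1)) ((1 - t) ^ α - t ^ α) t := by
    intro t _
    have h₁ := ((hasDerivAt_id t).const_sub 1).rpow_const (p := α + 1) (Or.inr (by linarith))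
    have h₂ := (hasDerivAt_id t).rpow_const (p := α + 1) (Or.inr (by linarith))
    refine ((h₁.add h₂).neg.div_const (α + 1)).congr_deriv ?_
    simp only [id, add_sub_cancel_right]
    field_simp
    ring
  rw [intervalIntegral.integral_eq_sub_of_hasDerivAt hF
    ((continuous_rpow_kernel hα.le).intervalIntegrable _ _)]
  have hhalf : (1 / 2 : ℝ) ^ (α + 1) = 1 / 2 ^ α / 2 := by
    rw [Real.rpow_add_one (by norm_num), Real.div_rpow zero_le_one zero_le_two, Real.one_rpow]
    ring
  rw [show (1 : ℝ) - 1 / 2 = 1 / 2 by norm_num, sub_zero, Real.one_rpow, Real.zero_rpow hα₁, hhalf]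
  field_simp
  ring

theorem abs_rpow_kernel_one_sub (α t : ℝ) :
    |(1 - (1 - t)) ^ α - (1 - t) ^ α| = |(1 - t) ^ α - t ^ α| := by
  rw [sub_sub_cancel, abs_sub_comm]

theorem integral_abs_rpow_kernel {α : ℝ} (hα : 0 < α) :
    ∫ t in (0 : ℝ)..1, |(1 - t) ^ α - t ^ α| = 2 * ((1 - 1 / 2 ^ α) / (α + 1)) := by
  have hk : ∀ p q : ℝ, IntervalIntegrable (fun t : ℝ => |(1 - t) ^ α - t ^ α|) volume p q :=
    (continuous_rpow_kernel hα.le).abs.intervalIntegrable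
  have hreflect : ∫ t in (1 / 2 : ℝ)..1, |(1 - t) ^ α - t ^ α| =
      ∫ t in (0 : ℝ)..1 / 2, |(1 - t) ^ α - t ^ α| := by
    have := intervalIntegral.integral_comp_sub_left (a := 1 / 2) (b := 1)
      (fun t : ℝ => |(1 - t) ^ α - t ^ α|) 1
    simp only [abs_rpow_kernel_one_sub] at this
    rwa [sub_self, show (1 : ℝ) - 1 / 2 = 1 / 2 by norm_num] at this
  have hfirst : ∫ t in (0 : ℝ)..1 / 2, |(1 - t) ^ α - t ^ α| =
      ∫ t in (0 : ℝ)..1 / 2, ((1 - t) ^ α - t ^ α) := by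
    refine intervalIntegral.integral_congr fun t ht => abs_of_nonneg ?_
    rw [uIcc_of_le (by norm_num)] at ht
    exact sub_nonneg.2 (Real.rpow_le_rpow ht.1 (by linarith [ht.2]) hα.le)
  rw [← intervalIntegral.integral_add_adjacent_intervals (hk 0 (1 / 2)) (hk (1 / 2) 1),
    hreflect, hfirst, integral_rpow_kernel_zero_half hα]
  ring

theorem integral_abs_rpow_kernel_mul_affine {α : ℝ} (hα : 0 < α) (A B : ℝ) :
    ∫ t in (0 : ℝ)..1, |(1 - t) ^ α - t ^ α| * ((1 - t) * A + t * B) =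
      (A + B) / (α + 1) * (1 - 1 / 2 ^ α) := by
  have hk := (continuous_rpow_kernel hα.le).abs
  have hreflect : ∫ t in (0 : ℝ)..1, |(1 - t) ^ α - t ^ α| * ((1 - t) * A + t * B) =
      ∫ t in (0 : ℝ)..1, |(1 - t) ^ α - t ^ α| * (t * A + (1 - t) * B) := by
    have := intervalIntegral.integral_comp_sub_left (a := 0) (b := 1)
      (fun t : ℝ => |(1 - t) ^ α - t ^ α| * ((1 - t) * A + t * B)) 1
    simp only [abs_rpow_kernel_one_sub] at this
    simp only [sub_sub_cancel, sub_zero, sub_self] at this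
    exact this.symm
  have hsum : (∫ t in (0 : ℝ)..1, |(1 - t) ^ α - t ^ α| * ((1 - t) * A + t * B)) +
      ∫ t in (0 : ℝ)..1, |(1 - t) ^ α - t ^ α| * (t * A + (1 - t) * B) =
      (A + B) * ∫ t in (0 : ℝ)..1, |(1 - t) ^ α - t ^ α| := by
    have hku : ∀ u : ℝ → ℝ, Continuous u →
        IntervalIntegrable (fun t => |(1 - t) ^ α - t ^ α| * u t) volume 0 1 :=
      fun u hu => (hk.mul hu).intervalIntegrable 0 1
    rw [← intervalIntegral.integral_add (hku (fun t => (1 - t) * A + t * B) (by fun_prop))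
      (hku (fun t => t * A + (1 - t) * B) (by fun_prop)),
      ← intervalIntegral.integral_const_mul]
    congr 1 with t
    ring
  rw [← hreflect, integral_abs_rpow_kernel hα] at hsum
  linear_combination hsum / 2

theorem abs_integral_rpow_kernel_mul_le {α : ℝ} (hα : 0 < α) {g : ℝ → ℝ} {A B : ℝ}
    (hg : IntervalIntegrable g volume 0 1)
    (hle : ∀ t ∈ Icc (0 : ℝ) 1, |g t| ≤ (1 - t) * A + t * B) :
    |∫ t in (0 : ℝ)..1, ((1 - t) ^ α - t ^ α) * g t| ≤ (A + B) / (α + 1) * (1 - 1 / 2 ^ α) := by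
  have hk := (continuous_rpow_kernel hα.le).abs
  calc |∫ t in (0 : ℝ)..1, ((1 - t) ^ α - t ^ α) * g t|
      ≤ ∫ t in (0 : ℝ)..1, |(1 - t) ^ α - t ^ α| * |g t| := by
        simpa only [abs_mul] using intervalIntegral.abs_integral_le_integral_abs
          (f := fun t => ((1 - t) ^ α - t ^ α) * g t) zero_le_one
    _ ≤ ∫ t in (0 : ℝ)..1, |(1 - t) ^ α - t ^ α| * ((1 - t) * A + t * B) :=
        intervalIntegral.integral_mono_on zero_le_one (hg.abs.continuousOn_mul hk.continuousOn)
          ((hk.mul (by fun_prop)).intervalIntegrable 0 1)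
          fun t ht => mul_le_mul_of_nonneg_left (hle t ht) (abs_nonneg _)
    _ = (A + B) / (α + 1) * (1 - 1 / 2 ^ α) := integral_abs_rpow_kernel_mul_affine hα A B

theorem fractional_estimate_condC_preinvex_general
    (A : Set ℝ) (η : ℝ → ℝ → ℝ) (a b : ℝ) (f : ℝ → ℝ) (α : ℝ)
    (hinv : InvexSet A η) (hC : CondC A η)
    (ha : a ∈ A) (hb : b ∈ A) (hab : a < a + η b a)
    (hdiff : ∀ x ∈ A, DifferentiableAt ℝ f x)
    (hint : IntervalIntegrable (deriv f) volume a (a + η b a))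
    (hpre : PreinvexOn A η (fun x => |deriv f x|))
    (hα : 0 < α) :
    |(f a + f (a + η b a)) / 2 -
        Real.Gamma (α + 1) / (2 * (η b a) ^ α) *
          (JL α a (a + η b a) f + JR α a (a + η b a) f)| ≤
      η b a / (2 * (α + 1)) * (1 - 1 / 2 ^ α) *
        (|deriv f a| + |deriv f (a + η b a)|) := by
  have hη : 0 < η b a := by linarith
  have hsegment := hinv.Icc_subset ha hb hη
  have hc : a + η b a ∈ A := hsegment (right_mem_Icc.2 hab.le)
  rw [trapezoid_sub_fractional_eq hη hα (fun x hx => hdiff x (hsegment hx)) hint, abs_mul,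
    abs_neg, abs_of_pos (half_pos hη)]
  have hbound := abs_integral_rpow_kernel_mul_le hα (hint.comp_add_mul_zero_one hη.ne')
    fun t ht => hpre.le_segment_of_condC hC ha hb hc ht
  calc η b a / 2 * |∫ t in (0 : ℝ)..1, ((1 - t) ^ α - t ^ α) * deriv f (a + t * η b a)|
      ≤ η b a / 2 * ((|deriv f a| + |deriv f (a + η b a)|) / (α + 1) * (1 - 1 / 2 ^ α)) :=
        mul_le_mul_of_nonneg_left hbound (half_pos hη).le
    _ = η b a / (2 * (α + 1)) * (1 - 1 / 2 ^ α) * (|deriv f a| + |deriv f (a + η b a)|) := by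
        rw [div_mul_eq_div_div]
        ring

theorem fractional_estimate_condC_preinvex
    (A : Set ℝ) (η : ℝ → ℝ → ℝ) (a b : ℝ) (f : ℝ → ℝ) (α : ℝ)
    (hA : IsOpen A) (hinv : InvexSet A η) (hC : CondC A η)
    (ha : a ∈ A) (hb : b ∈ A) (hab : a < a + η b a)
    (hdiff : ∀ x ∈ A, DifferentiableAt ℝ f x)
    (hint : IntervalIntegrable (deriv f) volume a (a + η b a))
    (hpre : PreinvexOn A η (fun x => |deriv f x|))
    (hα : 0 < α) :
    |(f a + f (a + η b a)) / 2 -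
        Real.Gamma (α + 1) / (2 * (η b a) ^ α) *
          (JL α a (a + η b a) f + JR α a (a + η b a) f)| ≤
      η b a / (2 * (α + 1)) * (1 - 1 / 2 ^ α) *
        (|deriv f a| + |deriv f (a + η b a)|) :=
  fractional_estimate_condC_preinvex_general A η a b f α hinv hC ha hb hab hdiff hint hpre hα
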